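/- arXiv:2505.15975 — 3 statements merged into one kernel-verified Lean document; each statement's English description precedes it below -/
import Mathlib

section
/- If P(X) = -b1*X + b2*X^2, ρ(X) = -b1*X + 3*b2*X^2, and for X ≥ 0 with ρ(X) ≠ 0 we set w(X) = P(X)/ρ(X) and c_s^2(X) = P'(X)/ρ'(X), then whenever both are defined, c_s^2(X) = (1 + w(X))/(5 − 3·w(X)). -/
/-! Both `P` and `ρ` carry the factor `-X`; cancelling it makes `w` and `c_s²` ratios of affine
functions of `b2 * X`, and eliminating `b2 * X` between them is a rational identity. -/

-- When `b1 = 6 * b2 * X` both sides are junk `_ / 0 = 0`, so no hypothesis on that is needed.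
theorem one_add_div_div_five_sub_div {K : Type*} [Field K] [NeZero (2 : K)] {b1 b2 X : K}
    (h : b1 - 3 * b2 * X ≠ 0) :
    (1 + (b1 - b2 * X) / (b1 - 3 * b2 * X)) / (5 - 3 * ((b1 - b2 * X) / (b1 - 3 * b2 * X))) =
      (b1 - 2 * b2 * X) / (b1 - 6 * b2 * X) := by
  have hnum : 1 + (b1 - b2 * X) / (b1 - 3 * b2 * X) =
      2 * (b1 - 2 * b2 * X) / (b1 - 3 * b2 * X) := by
    rw [one_add_div h]
    ring
  have hden : 5 - 3 * ((b1 - b2 * X) / (b1 - 3 * b2 * X)) =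
      2 * (b1 - 6 * b2 * X) / (b1 - 3 * b2 * X) := by
    rw [mul_div_assoc', sub_div' h]
    ring
  rw [hnum, hden, div_div_div_cancel_right₀ h, mul_div_mul_left _ _ two_ne_zero]

namespace KEssence

noncomputable section

variable (b1 b2 : ℝ)

def pressure (X : ℝ) : ℝ := -b1 * X + b2 * X ^ 2

def energyDensity (X : ℝ) : ℝ := -b1 * X + 3 * b2 * X ^ 2

def eos (X : ℝ) : ℝ := pressure b1 b2 X / energyDensity b1 b2 X

def soundSpeedSq (X : ℝ) : ℝ := deriv (pressure b1 b2) X / deriv (energyDensity b1 b2) X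

theorem hasDerivAt_pressure (X : ℝ) :
    HasDerivAt (pressure b1 b2) (-b1 + 2 * b2 * X) X :=
  (((hasDerivAt_id' X).const_mul (-b1)).add ((hasDerivAt_pow 2 X).const_mul b2)).congr_deriv
    (by ring)

theorem hasDerivAt_energyDensity (X : ℝ) :
    HasDerivAt (energyDensity b1 b2) (-b1 + 6 * b2 * X) X :=
  (((hasDerivAt_id' X).const_mul (-b1)).add
    ((hasDerivAt_pow 2 X).const_mul (3 * b2))).congr_deriv (by ring)

theorem soundSpeedSq_eq (X : ℝ) :
    soundSpeedSq b1 b2 X = (b1 - 2 * b2 * X) / (b1 - 6 * b2 * X) := by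
  rw [soundSpeedSq, (hasDerivAt_pressure b1 b2 X).deriv, (hasDerivAt_energyDensity b1 b2 X).deriv,
    ← neg_div_neg_eq]
  congr 1 <;> ring

theorem pressure_eq_neg_mul (X : ℝ) : pressure b1 b2 X = -X * (b1 - b2 * X) := by
  rw [pressure]; ring

theorem energyDensity_eq_neg_mul (X : ℝ) :
    energyDensity b1 b2 X = -X * (b1 - 3 * b2 * X) := by
  rw [energyDensity]; ring

theorem eos_eq {X : ℝ} (hX : X ≠ 0) :
    eos b1 b2 X = (b1 - b2 * X) / (b1 - 3 * b2 * X) := by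
  rw [eos, pressure_eq_neg_mul, energyDensity_eq_neg_mul, mul_div_mul_left _ _ (neg_ne_zero.2 hX)]

end

end KEssence

open KEssence in
/-- For `P X = -b1*X + b2*X^2` and `ρ X = -b1*X + 3*b2*X^2`, with `w = P/ρ` and
`c_s^2 = P'/ρ'`, whenever both are defined one has `c_s^2 = (1+w)/(5-3w)`. -/
theorem kessence_sound_speed_eq_of_eos (b1 b2 : ℝ) :
    ∀ X : ℝ, 0 ≤ X →
      (-b1 * X + 3 * b2 * X ^ 2) ≠ 0 →
      deriv (fun X : ℝ => -b1 * X + 3 * b2 * X ^ 2) X ≠ 0 →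
      (5 - 3 * ((-b1 * X + b2 * X ^ 2) / (-b1 * X + 3 * b2 * X ^ 2))) ≠ 0 →
      deriv (fun X : ℝ => -b1 * X + b2 * X ^ 2) X /
          deriv (fun X : ℝ => -b1 * X + 3 * b2 * X ^ 2) X =
        (1 + (-b1 * X + b2 * X ^ 2) / (-b1 * X + 3 * b2 * X ^ 2)) /
          (5 - 3 * ((-b1 * X + b2 * X ^ 2) / (-b1 * X + 3 * b2 * X ^ 2))) := by
  intro X _ hρ _ _
  change soundSpeedSq b1 b2 X = (1 + eos b1 b2 X) / (5 - 3 * eos b1 b2 X)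
  change energyDensity b1 b2 X ≠ 0 at hρ
  obtain ⟨hX, hden⟩ : -X ≠ 0 ∧ b1 - 3 * b2 * X ≠ 0 := by
    rwa [energyDensity_eq_neg_mul, mul_ne_zero_iff] at hρ
  rw [soundSpeedSq_eq, eos_eq b1 b2 (neg_ne_zero.1 hX), one_add_div_div_five_sub_div hden]
end

section
/- Suppose b1 ≤ 0 and b2 ≥ 0 with (b1, b2) ≠ (0, 0). Then for every X > 0 with b1 − 3·b2·X ≠ 0, the equation of state w(X) = (b1 − b2·X)/(b1 − 3·b2·X) satisfies 1/3 ≤ w(X) ≤ 1. -/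
/-!
Under `b1 ≤ 0 ≤ b2` and `X ≥ 0` the denominator `b1 - 3 b2 X` is nonpositive, hence negative
once it is nonzero. The two bounds then reduce to sign checks of the identities
`w - 1 = 2 b2 X / (b1 - 3 b2 X)` and `w - 1/3 = 2 b1 / (3 (b1 - 3 b2 X))`.
-/

/-- `w = p / ρ` with `p = P = -b1 X + b2 X²` and `ρ = 2 X P' - P = -b1 X + 3 b2 X²`,
after cancelling the common factor `-X`. -/
noncomputable def kessenceEoS (b1 b2 X : ℝ) : ℝ := (b1 - b2 * X) / (b1 - 3 * b2 * X)

section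

variable {b1 b2 X : ℝ}

lemma kessenceEoS_sub_one (hden : b1 - 3 * b2 * X ≠ 0) :
    kessenceEoS b1 b2 X - 1 = 2 * b2 * X / (b1 - 3 * b2 * X) := by
  rw [kessenceEoS, div_sub_one hden]
  ring

lemma kessenceEoS_sub_one_third (hden : b1 - 3 * b2 * X ≠ 0) :
    kessenceEoS b1 b2 X - 1 / 3 = 2 * b1 / (3 * (b1 - 3 * b2 * X)) := by
  rw [kessenceEoS, div_sub_div _ _ hden three_ne_zero, mul_comm (b1 - 3 * b2 * X)]
  ring

lemma kessenceEoS_denom_neg (hb1 : b1 ≤ 0) (hb2 : 0 ≤ b2) (hX : 0 ≤ X)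
    (hden : b1 - 3 * b2 * X ≠ 0) : b1 - 3 * b2 * X < 0 :=
  lt_of_le_of_ne (by nlinarith) hden

lemma kessenceEoS_le_one (hb1 : b1 ≤ 0) (hb2 : 0 ≤ b2) (hX : 0 ≤ X)
    (hden : b1 - 3 * b2 * X ≠ 0) : kessenceEoS b1 b2 X ≤ 1 := by
  have hdiff : 2 * b2 * X / (b1 - 3 * b2 * X) ≤ 0 :=
    div_nonpos_of_nonneg_of_nonpos (by positivity) (kessenceEoS_denom_neg hb1 hb2 hX hden).le
  linarith [kessenceEoS_sub_one hden]

lemma one_third_le_kessenceEoS (hb1 : b1 ≤ 0) (hb2 : 0 ≤ b2) (hX : 0 ≤ X)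
    (hden : b1 - 3 * b2 * X ≠ 0) : 1 / 3 ≤ kessenceEoS b1 b2 X := by
  have hdiff : 0 ≤ 2 * b1 / (3 * (b1 - 3 * b2 * X)) :=
    div_nonneg_of_nonpos (by linarith) (by linarith [kessenceEoS_denom_neg hb1 hb2 hX hden])
  linarith [kessenceEoS_sub_one_third hden]

end

theorem kessence_eos_bounds_general (b1 b2 : ℝ) (hb1 : b1 ≤ 0) (hb2 : 0 ≤ b2) :
    ∀ X : ℝ, 0 < X → b1 - 3 * b2 * X ≠ 0 →
      (1 / 3 ≤ (b1 - b2 * X) / (b1 - 3 * b2 * X) ∧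
        (b1 - b2 * X) / (b1 - 3 * b2 * X) ≤ 1) := fun _ hX hden =>
  ⟨one_third_le_kessenceEoS hb1 hb2 hX.le hden, kessenceEoS_le_one hb1 hb2 hX.le hden⟩

/-- Under the stability conditions `b1 ≤ 0`, `b2 ≥ 0`, `(b1,b2) ≠ (0,0)`, for every
`X > 0` with nonzero denominator, the equation of state
`w = (b1 - b2*X)/(b1 - 3*b2*X)` satisfies `1/3 ≤ w ≤ 1`. -/
theorem kessence_eos_bounds (b1 b2 : ℝ) (hb1 : b1 ≤ 0) (hb2 : 0 ≤ b2)
    (hne : (b1, b2) ≠ (0, 0)) :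
    ∀ X : ℝ, 0 < X → b1 - 3 * b2 * X ≠ 0 →
      (1 / 3 ≤ (b1 - b2 * X) / (b1 - 3 * b2 * X) ∧
        (b1 - b2 * X) / (b1 - 3 * b2 * X) ≤ 1) :=
  kessence_eos_bounds_general b1 b2 hb1 hb2
end

section
/- Suppose P : ℝ → ℝ is twice differentiable and X : (0,∞) → (0,∞) is differentiable and satisfies (P'(X(a)) + 2·X(a)·P''(X(a)))·a·X'(a) + 6·X(a)·P'(X(a)) = 0 for all a > 0. Then the function a ↦ a⁶·X(a)·P'(X(a))² is constant. -/
/-! The derivative of `a ↦ a⁶ X(a) P'(X(a))²` is `a⁵ P'(X(a))` times the left-hand side of the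
field equation, so it vanishes on the connected set `(0, ∞)`. -/

theorem hasDerivAt_pow_six_mul_mul_comp_sq {g X : ℝ → ℝ} {a : ℝ}
    (hX : DifferentiableAt ℝ X a) (hg : DifferentiableAt ℝ g (X a)) :
    HasDerivAt (fun a => a ^ 6 * X a * g (X a) ^ 2)
      (a ^ 5 * g (X a) *
        ((g (X a) + 2 * X a * deriv g (X a)) * a * deriv X a + 6 * X a * g (X a))) a := by
  have hgX : HasDerivAt (fun a => g (X a)) (deriv g (X a) * deriv X a) a :=
    hg.hasDerivAt.comp a hX.hasDerivAt
  refine (((hasDerivAt_pow 6 a).mul hX.hasDerivAt).mul (hgX.pow 2)).congr_deriv ?_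
  simp only [Pi.mul_apply, Pi.pow_apply, Nat.cast_ofNat]
  ring

theorem kessence_first_integral_general (P X : ℝ → ℝ)
    (hP' : Differentiable ℝ (deriv P))
    (hXdiff : ∀ a : ℝ, 0 < a → DifferentiableAt ℝ X a)
    (hode : ∀ a : ℝ, 0 < a →
      (deriv P (X a) + 2 * X a * deriv (deriv P) (X a)) * a * deriv X a
        + 6 * X a * deriv P (X a) = 0) :
    ∀ a b : ℝ, 0 < a → 0 < b →
      a ^ 6 * X a * (deriv P (X a)) ^ 2 = b ^ 6 * X b * (deriv P (X b)) ^ 2 := by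
  intro a b ha hb
  have hderiv : ∀ x ∈ Set.Ioi (0 : ℝ),
      HasDerivAt (fun a => a ^ 6 * X a * deriv P (X a) ^ 2) 0 x := fun x hx => by
    simpa only [hode x hx, mul_zero] using
      hasDerivAt_pow_six_mul_mul_comp_sq (hXdiff x hx) (hP' (X x))
  exact isOpen_Ioi.is_const_of_deriv_eq_zero isPreconnected_Ioi
    (fun x hx => (hderiv x hx).differentiableAt.differentiableWithinAt)
    (fun x hx => (hderiv x hx).deriv) ha hb

/-- First integral of purely kinetic k-essence: if `X` solves
`(P' + 2X P'')·a·X' + 6X·P' = 0` on `(0,∞)`, then `a⁶·X·(P'(X))²` is constant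
on `(0,∞)`. -/
theorem kessence_first_integral (P X : ℝ → ℝ)
    (hP : Differentiable ℝ P) (hP' : Differentiable ℝ (deriv P))
    (hXpos : ∀ a : ℝ, 0 < a → 0 < X a)
    (hXdiff : ∀ a : ℝ, 0 < a → DifferentiableAt ℝ X a)
    (hode : ∀ a : ℝ, 0 < a →
      (deriv P (X a) + 2 * X a * deriv (deriv P) (X a)) * a * deriv X a
        + 6 * X a * deriv P (X a) = 0) :
    ∀ a b : ℝ, 0 < a → 0 < b →
      a ^ 6 * X a * (deriv P (X a)) ^ 2 = b ^ 6 * X b * (deriv P (X b)) ^ 2 :=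
  kessence_first_integral_general P X hP' hXdiff hode
end
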